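/- arXiv:1301.5288 — 5 statements merged into one kernel-verified Lean document; each statement's English description precedes it below -/
import Mathlib

section
/- Let Σ ∈ ℝ^{(n+m)×(n+m)} be symmetric positive definite with blocks Σ_gg, Σ_gh = Σ_hgᵀ, Σ_hh, let φ_Σ denote the centered Gaussian density on ℝ^{n+m} with covariance Σ, and let q : ℝ^n → ℝ≥0 be any nonnegative function (the likelihood g ↦ p(y|g), which does not depend on h). Suppose (ĝ, ĥ) ∈ ℝ^n × ℝ^m is the unique global maximizer of (g,h) ↦ q(g) · φ_Σ(g,h). Then ĝ is a global maximizer of g ↦ q(g) · φ_{Σ_gg}(g), where φ_{Σ_gg} is the centered Gaussian density on ℝ^n with covariance Σ_gg, and ĥ = Σ_hg Σ_gg⁻¹ ĝ. -/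
/-!
Completing the square in `h` factors the joint Gaussian density as
`φ_Σ(g, h) = φ_{Σgg}(g) · φ_T(h - Σhg Σgg⁻¹ g)`, where `T = Σhh - Σhg Σgg⁻¹ Σgh` is the Schur
complement, which is again positive definite. The second factor is maximal exactly at
`h = Σhg Σgg⁻¹ g`, so for each `g` the joint objective is maximised there with value
`q(g) φ_{Σgg}(g) φ_T(0)`; comparing profile values gives the first claim, and uniqueness of the joint
maximiser gives the second.
-/

open Matrix

/-- The centered Gaussian probability density on `ι → ℝ` with covariance matrix `S`:
`φ_S(z) = det(2πS)^{-1/2} exp(-zᵀ S⁻¹ z / 2)`. -/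
noncomputable def gaussPdf {ι : Type*} [Fintype ι] [DecidableEq ι]
    (S : Matrix ι ι ℝ) (z : ι → ℝ) : ℝ :=
  (Real.sqrt ((2 * Real.pi) ^ Fintype.card ι * S.det))⁻¹ *
    Real.exp (-(z ⬝ᵥ (S⁻¹ *ᵥ z)) / 2)

namespace Matrix

variable {ι κ : Type*}

theorem PosDef.of_fromBlocks₁₁ {R : Type*} [Ring R] [PartialOrder R] [StarRing R]
    {A : Matrix ι ι R} {B : Matrix ι κ R} {C : Matrix κ ι R} {D : Matrix κ κ R}
    (h : (fromBlocks A B C D).PosDef) : A.PosDef :=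
  h.submatrix Sum.inl_injective

variable [Fintype ι] [Fintype κ] [DecidableEq ι]

theorem PosDef.schur_fromBlocks₁₁ {K : Type*} [Field K] [PartialOrder K] [StarRing K]
    {A : Matrix ι ι K} {B : Matrix ι κ K} {D : Matrix κ κ K}
    (h : (fromBlocks A B Bᴴ D).PosDef) : (D - Bᴴ * A⁻¹ * B).PosDef := by
  have hA := h.of_fromBlocks₁₁
  have := hA.isUnit.invertible
  refine .of_dotProduct_mulVec_pos ((IsHermitian.fromBlocks₁₁ B D hA.1).mp h.1) fun y hy => ?_
  have hxy : -((A⁻¹ * B) *ᵥ y) ⊕ᵥ y ≠ 0 := fun h0 => hy (by simpa using congrArg (· ∘ Sum.inr) h0)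
  simpa [dotProduct_mulVec, schur_complement_eq₁₁ B D _ _ hA.1] using h.dotProduct_mulVec_pos hxy

theorem PosDef.schur_fromBlocks_transpose {A : Matrix ι ι ℝ} {C : Matrix κ ι ℝ}
    {D : Matrix κ κ ℝ} (h : (fromBlocks A Cᵀ C D).PosDef) : (D - C * A⁻¹ * Cᵀ).PosDef := by
  simpa [conjTranspose_eq_transpose_of_trivial] using
    PosDef.schur_fromBlocks₁₁ (B := Cᵀ) (by simpa [conjTranspose_eq_transpose_of_trivial] using h)

variable [DecidableEq κ]

section CommRing

variable {α : Type*} [CommRing α]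

theorem inv_fromBlocks_mulVec {A : Matrix ι ι α} (B : Matrix ι κ α) (C : Matrix κ ι α)
    (D : Matrix κ κ α) (hA : IsUnit A.det) (hT : IsUnit (D - C * A⁻¹ * B).det)
    (g : ι → α) (h : κ → α) :
    (fromBlocks A B C D)⁻¹ *ᵥ (g ⊕ᵥ h) =
      (A⁻¹ *ᵥ (g - B *ᵥ ((D - C * A⁻¹ * B)⁻¹ *ᵥ (h - C *ᵥ (A⁻¹ *ᵥ g))))) ⊕ᵥ
        ((D - C * A⁻¹ * B)⁻¹ *ᵥ (h - C *ᵥ (A⁻¹ *ᵥ g))) := by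
  set T := D - C * A⁻¹ * B with hTdef
  have := invertibleOfIsUnitDet A hA
  have : Invertible (fromBlocks A B C D) := by
    refine (isUnit_iff_isUnit_det _).mpr ?_ |>.invertible
    rw [det_fromBlocks₁₁, invOf_eq_nonsing_inv]
    exact hA.mul hT
  refine inv_mulVec_eq_vec ?_
  have hDT : D * T⁻¹ = 1 + C * A⁻¹ * (B * T⁻¹) := by
    rw [← mul_nonsing_inv T hT, ← Matrix.mul_assoc, ← Matrix.add_mul, hTdef, sub_add_cancel]
  rw [fromBlocks_mulVec]
  simp only [Sum.elim_comp_inl, Sum.elim_comp_inr, mulVec_mulVec, mul_nonsing_inv _ hA, one_mulVec]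
  congr 1
  · exact (sub_add_cancel _ _).symm
  · rw [hDT, add_mulVec, one_mulVec, mulVec_sub, ← mulVec_mulVec _ (C * A⁻¹) (B * T⁻¹)]
    abel

theorem dotProduct_inv_fromBlocks_mulVec {A : Matrix ι ι α} (C : Matrix κ ι α)
    (D : Matrix κ κ α) (hA : A.IsSymm) (hAdet : IsUnit A.det)
    (hTdet : IsUnit (D - C * A⁻¹ * Cᵀ).det) (g : ι → α) (h : κ → α) :
    (g ⊕ᵥ h) ⬝ᵥ ((fromBlocks A Cᵀ C D)⁻¹ *ᵥ (g ⊕ᵥ h)) =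
      g ⬝ᵥ (A⁻¹ *ᵥ g) +
        (h - C *ᵥ (A⁻¹ *ᵥ g)) ⬝ᵥ ((D - C * A⁻¹ * Cᵀ)⁻¹ *ᵥ (h - C *ᵥ (A⁻¹ *ᵥ g))) := by
  have hcross : ∀ w, g ⬝ᵥ (A⁻¹ *ᵥ (Cᵀ *ᵥ w)) = (C *ᵥ (A⁻¹ *ᵥ g)) ⬝ᵥ w := fun w => by
    rw [dotProduct_mulVec, ← mulVec_transpose, hA.inv.eq, dotProduct_mulVec, vecMul_transpose]
  rw [inv_fromBlocks_mulVec _ _ _ hAdet hTdet, sumElim_dotProduct_sumElim, mulVec_sub,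
    dotProduct_sub, hcross, sub_dotProduct]
  ring

end CommRing

end Matrix

section Gaussian

variable {ι κ : Type*} [Fintype ι] [Fintype κ] [DecidableEq ι] [DecidableEq κ]

theorem gaussPdf_pos {S : Matrix ι ι ℝ} (hS : S.PosDef) (z : ι → ℝ) : 0 < gaussPdf S z := by
  have := hS.det_pos
  unfold gaussPdf
  positivity

theorem gaussPdf_le_gaussPdf_zero {S : Matrix ι ι ℝ} (hS : S.PosDef) (z : ι → ℝ) :
    gaussPdf S z ≤ gaussPdf S 0 := by
  have hquad : 0 ≤ z ⬝ᵥ (S⁻¹ *ᵥ z) := by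
    simpa using hS.inv.posSemidef.dotProduct_mulVec_nonneg z
  unfold gaussPdf
  gcongr
  simpa using hquad

theorem gaussPdf_fromBlocks {A : Matrix ι ι ℝ} {C : Matrix κ ι ℝ} {D : Matrix κ κ ℝ}
    (h : (fromBlocks A Cᵀ C D).PosDef) (g : ι → ℝ) (v : κ → ℝ) :
    gaussPdf (fromBlocks A Cᵀ C D) (g ⊕ᵥ v) =
      gaussPdf A g * gaussPdf (D - C * A⁻¹ * Cᵀ) (v - C *ᵥ (A⁻¹ *ᵥ g)) := by
  have hA := h.of_fromBlocks₁₁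
  have hT := h.schur_fromBlocks_transpose
  have hAdet := hA.det_pos
  have hTdet := hT.det_pos
  have := hA.isUnit.invertible
  have hAsymm : A.IsSymm := (conjTranspose_eq_transpose_of_trivial A).symm.trans hA.1
  have hdet : (fromBlocks A Cᵀ C D).det = A.det * (D - C * A⁻¹ * Cᵀ).det := by
    rw [det_fromBlocks₁₁, invOf_eq_nonsing_inv]
  unfold gaussPdf
  rw [dotProduct_inv_fromBlocks_mulVec _ _ hAsymm hAdet.ne'.isUnit hTdet.ne'.isUnit, hdet,
    Fintype.card_sum, pow_add, mul_mul_mul_comm, Real.sqrt_mul (by positivity), mul_inv, neg_add,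
    add_div, Real.exp_add]
  ring

end Gaussian

/-- Separation lemma for joint MAP estimation.  Let `Σ = [[Σgg, Σgh], [Σhg, Σhh]]`
be symmetric positive definite with `Σgh = Σhgᵀ`, and let `q : ℝ^n → ℝ≥0` be any
nonnegative function (the likelihood `g ↦ p(y|g)`, independent of `h`).  If
`(ĝ, ĥ)` is the unique global maximizer of `(g,h) ↦ q(g) φ_Σ(g,h)`, then `ĝ` is a
global maximizer of `g ↦ q(g) φ_{Σgg}(g)` and `ĥ = Σhg Σgg⁻¹ ĝ`. -/
theorem map_separation {n m : ℕ}
    (Sgg : Matrix (Fin n) (Fin n) ℝ) (Sgh : Matrix (Fin n) (Fin m) ℝ)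
    (Shg : Matrix (Fin m) (Fin n) ℝ) (Shh : Matrix (Fin m) (Fin m) ℝ)
    (hsym : Sgh = Shgᵀ)
    (hpd : (Matrix.fromBlocks Sgg Sgh Shg Shh).PosDef)
    (q : (Fin n → ℝ) → ℝ) (hq : ∀ g, 0 ≤ q g)
    (ghat : Fin n → ℝ) (hhat : Fin m → ℝ)
    (hmax : ∀ (g : Fin n → ℝ) (h : Fin m → ℝ),
      q g * gaussPdf (Matrix.fromBlocks Sgg Sgh Shg Shh) (Sum.elim g h)
        ≤ q ghat * gaussPdf (Matrix.fromBlocks Sgg Sgh Shg Shh) (Sum.elim ghat hhat))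
    (huniq : ∀ (g : Fin n → ℝ) (h : Fin m → ℝ),
      q g * gaussPdf (Matrix.fromBlocks Sgg Sgh Shg Shh) (Sum.elim g h)
          = q ghat * gaussPdf (Matrix.fromBlocks Sgg Sgh Shg Shh) (Sum.elim ghat hhat)
        → g = ghat ∧ h = hhat) :
    (∀ g : Fin n → ℝ, q g * gaussPdf Sgg g ≤ q ghat * gaussPdf Sgg ghat)
    ∧ hhat = Shg *ᵥ (Sgg⁻¹ *ᵥ ghat) := by
  subst hsym
  set S := fromBlocks Sgg Shgᵀ Shg Shh
  set T := Shh - Shg * Sgg⁻¹ * Shgᵀ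
  have hT : T.PosDef := hpd.schur_fromBlocks_transpose
  let r : (Fin n → ℝ) → Fin m → ℝ := fun g => Shg *ᵥ (Sgg⁻¹ *ᵥ g)
  have hprofile : ∀ g, q g * gaussPdf S (g ⊕ᵥ r g) = q g * gaussPdf Sgg g * gaussPdf T 0 := by
    intro g
    rw [gaussPdf_fromBlocks hpd, sub_self, mul_assoc]
  have hle_profile : ∀ g h, q g * gaussPdf S (g ⊕ᵥ h) ≤ q g * gaussPdf S (g ⊕ᵥ r g) := by
    intro g h
    have := gaussPdf_pos hpd.of_fromBlocks₁₁ g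
    rw [hprofile, gaussPdf_fromBlocks hpd, ← mul_assoc]
    gcongr
    · exact mul_nonneg (hq g) this.le
    · exact gaussPdf_le_gaussPdf_zero hT _
  have hopt : q ghat * gaussPdf S (ghat ⊕ᵥ r ghat) = q ghat * gaussPdf S (ghat ⊕ᵥ hhat) :=
    le_antisymm (hmax _ _) (hle_profile _ _)
  refine ⟨fun g => ?_, (huniq _ _ hopt).2.symm⟩
  have hg := (hmax g (r g)).trans (hle_profile ghat hhat)
  rw [hprofile, hprofile] at hg
  exact le_of_mul_le_mul_right hg (gaussPdf_pos hT 0)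
end

section
/- Let N, M be natural numbers, K̄_full ∈ ℝ^{(N+M)×(N+M)} symmetric positive definite with top-left N×N block K̄ and bottom-left M×N block B, let y ∈ ℝ^N, γ > 0, and let V_i : ℝ → ℝ for i = 1, …, N be arbitrary functions. Suppose ĉ ∈ ℝ^N is the unique global minimizer of c ↦ Σ_{i=1}^N V_i(y_i − (K̄ c)_i) + γ cᵀ K̄ c. Then the vector f̂ ∈ ℝ^{N+M} whose first N coordinates are K̄ ĉ and whose last M coordinates are B ĉ is the unique global minimizer over f ∈ ℝ^{N+M} of J(f) = Σ_{i=1}^N V_i(y_i − f_i) + γ fᵀ K̄_full⁻¹ f. -/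
open Matrix

/-- `x` is the unique global minimizer of `f`. -/
def IsUniqueGlobalMin {α : Type*} (f : α → ℝ) (x : α) : Prop :=
  (∀ z, f x ≤ f z) ∧ ∀ z, f z = f x → z = x

/-!
Given `f`, let `c` solve `K̄ c = f_N` and put `u = K_full (c, 0) = (K̄ c, B c)`. In the inner
product defined by `K_full⁻¹`, the residual `f - u` is orthogonal to `u`: their product is
`(f - u) ⬝ (c, 0)`, and `f - u` vanishes on the first `N` coordinates. Since also
`u ⬝ K_full⁻¹ u = cᵀ K̄ c`, this gives `J f = Φ c + γ ‖f - u‖²` with `Φ` the coefficient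
objective, so `J f ≥ Φ c ≥ Φ ĉ = J f̂`, with equality only if `c = ĉ` and `f = u`, i.e. `f = f̂`.
-/
theorem IsUniqueGlobalMin.of_eq_add_nonneg {α β : Type*} {F : α → ℝ} {G : β → ℝ}
    {x : α} (hx : IsUniqueGlobalMin F x) (φ : α → β) (ψ : β → α) (R : β → ℝ)
    (hR : ∀ f, 0 ≤ R f) (hR_eq_zero : ∀ f, R f = 0 → f = φ (ψ f))
    (hG : ∀ f, G f = F (ψ f) + R f) (hGφ : ∀ c, G (φ c) = F c) :
    IsUniqueGlobalMin G (φ x) := by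
  refine ⟨fun f => ?_, fun f hf => ?_⟩
  · rw [hGφ, hG]
    linarith [hx.1 (ψ f), hR f]
  · rw [hGφ, hG] at hf
    have hRf : R f = 0 := by linarith [hx.1 (ψ f), hR f]
    rw [hR_eq_zero f hRf, hx.2 (ψ f) (by linarith)]

namespace Matrix

variable {m n R : Type*} [Fintype m] [Fintype n]

theorem mulVec_sumElim_zero [NonUnitalNonAssocSemiring R]
    (A : Matrix (m ⊕ n) (m ⊕ n) R) (c : m → R) :
    A *ᵥ Sum.elim c 0 =
      Sum.elim (A.submatrix Sum.inl Sum.inl *ᵥ c) (A.submatrix Sum.inr Sum.inl *ᵥ c) := by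
  ext (i | i) <;> simp [mulVec, dotProduct, Fintype.sum_sum_type]

theorem sumElim_zero_dotProduct [NonUnitalNonAssocSemiring R] (c : m → R) (f : m ⊕ n → R) :
    Sum.elim c 0 ⬝ᵥ f = c ⬝ᵥ (f ∘ Sum.inl) := by
  simp [dotProduct, Fintype.sum_sum_type]

/-- The last term is twice the `K⁻¹`-inner product of `f - K *ᵥ e` with `K *ᵥ e`. -/
theorem dotProduct_inv_mulVec_eq [CommRing R] [DecidableEq n] {K : Matrix n n R}
    (hK : K.IsSymm) (hdet : IsUnit K.det) (e f : n → R) :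
    f ⬝ᵥ K⁻¹ *ᵥ f = e ⬝ᵥ K *ᵥ e + (f - K *ᵥ e) ⬝ᵥ K⁻¹ *ᵥ (f - K *ᵥ e)
      + 2 * ((f - K *ᵥ e) ⬝ᵥ e) := by
  have hinv : K⁻¹ *ᵥ (K *ᵥ e) = e := by
    rw [mulVec_mulVec, nonsing_inv_mul _ hdet, one_mulVec]
  have hsymm : (K *ᵥ e) ⬝ᵥ K⁻¹ *ᵥ f = e ⬝ᵥ f := by
    rw [dotProduct_mulVec, ← vecMul_transpose, hK.eq, vecMul_vecMul,
      mul_nonsing_inv _ hdet, vecMul_one]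
  have hKe : (K *ᵥ e) ⬝ᵥ e = e ⬝ᵥ K *ᵥ e := dotProduct_comm _ _
  simp only [mulVec_sub, sub_dotProduct, dotProduct_sub, hinv, hsymm, hKe]
  rw [dotProduct_comm e f]
  ring

theorem dotProduct_inv_mulVec_eq_of_mulVec_eq_inl [CommRing R] [DecidableEq m] [DecidableEq n]
    {K : Matrix (m ⊕ n) (m ⊕ n) R} (hK : K.IsSymm) (hdet : IsUnit K.det)
    {c : m → R} {f : m ⊕ n → R} (hc : K.submatrix Sum.inl Sum.inl *ᵥ c = f ∘ Sum.inl) :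
    f ⬝ᵥ K⁻¹ *ᵥ f = c ⬝ᵥ K.submatrix Sum.inl Sum.inl *ᵥ c
      + (f - K *ᵥ Sum.elim c 0) ⬝ᵥ K⁻¹ *ᵥ (f - K *ᵥ Sum.elim c 0) := by
  have hKe : (K *ᵥ Sum.elim c 0) ∘ Sum.inl = K.submatrix Sum.inl Sum.inl *ᵥ c := by
    rw [mulVec_sumElim_zero, Sum.elim_comp_inl]
  have horth : (f - K *ᵥ Sum.elim c 0) ⬝ᵥ Sum.elim c 0 = 0 := by
    rw [dotProduct_comm, sumElim_zero_dotProduct, Pi.sub_comp, hKe, hc, sub_self,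
      dotProduct_zero]
  rw [dotProduct_inv_mulVec_eq hK hdet (Sum.elim c 0), horth, sumElim_zero_dotProduct, hKe,
    mul_zero, add_zero]

end Matrix

/-- Finite-dimensional form of the main theorem.  Let `K̄_full ∈ ℝ^{(N+M)×(N+M)}`
(indices `Fin N ⊕ Fin M`) be symmetric positive definite, with top-left `N×N` block
`K̄ = K̄_full.submatrix inl inl` and bottom-left `M×N` block `B = K̄_full.submatrix inr inl`.
If `ĉ` is the unique global minimizer of the coefficient objective
`c ↦ ∑ᵢ Vᵢ(yᵢ - (K̄c)ᵢ) + γ cᵀ K̄ c`, then the vector `f̂` whose first `N` coordinates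
are `K̄ ĉ` and last `M` coordinates are `B ĉ` is the unique global minimizer of
`J(f) = ∑ᵢ Vᵢ(yᵢ - fᵢ) + γ fᵀ K̄_full⁻¹ f`. -/
theorem map_estimate_is_rkhs_estimate {N M : ℕ}
    (Kfull : Matrix (Fin N ⊕ Fin M) (Fin N ⊕ Fin M) ℝ)
    (hpd : Kfull.PosDef)
    (y : Fin N → ℝ) (γ : ℝ) (hγ : 0 < γ) (V : Fin N → ℝ → ℝ)
    (chat : Fin N → ℝ)
    (hchat : IsUniqueGlobalMin
      (fun c : Fin N → ℝ =>
        ∑ i, V i (y i - ((Kfull.submatrix Sum.inl Sum.inl) *ᵥ c) i)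
          + γ * (c ⬝ᵥ ((Kfull.submatrix Sum.inl Sum.inl) *ᵥ c))) chat) :
    IsUniqueGlobalMin
      (fun f : Fin N ⊕ Fin M → ℝ =>
        ∑ i, V i (y i - f (Sum.inl i)) + γ * (f ⬝ᵥ (Kfull⁻¹ *ᵥ f)))
      (Sum.elim ((Kfull.submatrix Sum.inl Sum.inl) *ᵥ chat)
        ((Kfull.submatrix Sum.inr Sum.inl) *ᵥ chat)) := by
  set Kbar := Kfull.submatrix Sum.inl Sum.inl
  have hsymm : Kfull.IsSymm := (conjTranspose_eq_transpose_of_trivial Kfull).symm.trans hpd.1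
  have hdet : IsUnit Kfull.det := isUnit_iff_ne_zero.mpr hpd.det_pos.ne'
  have hKbar : IsUnit Kbar.det := (hpd.submatrix Sum.inl_injective).isUnit.map detMonoidHom
  let φ (c : Fin N → ℝ) : Fin N ⊕ Fin M → ℝ := Kfull *ᵥ Sum.elim c 0
  let ψ (f : Fin N ⊕ Fin M → ℝ) : Fin N → ℝ := Kbar⁻¹ *ᵥ (f ∘ Sum.inl)
  let q (v : Fin N ⊕ Fin M → ℝ) : ℝ := v ⬝ᵥ Kfull⁻¹ *ᵥ v
  have hq_nonneg (v) : 0 ≤ q v := by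
    simpa using hpd.inv.posSemidef.dotProduct_mulVec_nonneg v
  have hq_eq_zero (v) (hv : q v = 0) : v = 0 := by
    by_contra hne
    simpa [q, hv] using hpd.inv.dotProduct_mulVec_pos hne
  have hφ (c) : Kbar *ᵥ c = φ c ∘ Sum.inl := by
    simp only [φ, Kbar, mulVec_sumElim_zero, Sum.elim_comp_inl]
  have hψ (f) : Kbar *ᵥ ψ f = f ∘ Sum.inl := by
    rw [mulVec_mulVec, mul_nonsing_inv _ hKbar, one_mulVec]
  rw [← mulVec_sumElim_zero]
  refine hchat.of_eq_add_nonneg φ ψ (fun f => γ * q (f - φ (ψ f)))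
    (fun f => mul_nonneg hγ.le (hq_nonneg _))
    (fun f hf => sub_eq_zero.mp (hq_eq_zero _ ((mul_eq_zero.mp hf).resolve_left hγ.ne')))
    (fun f => ?_) (fun c => ?_)
  · rw [dotProduct_inv_mulVec_eq_of_mulVec_eq_inl hsymm hdet (hψ f), hψ f]
    simp only [q, φ, Function.comp_apply]
    ring
  · rw [dotProduct_inv_mulVec_eq_of_mulVec_eq_inl hsymm hdet (hφ c), hφ c]
    simp [φ]
end

section
/- Let A = ∫_{−∞}^{∞} exp(−f² − |1 − f|) df. Then (1/A) ∫_{−∞}^{∞} f · exp(−f² − |1 − f|) df − 1/2 = (e^{−3/4}/A) ∫_{1/2}^{∞} s · (e^{1−2s} − 1) · e^{−s²} ds. -/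
/-! Write `g f = exp (-f² - |1 - f|)` and substitute `f = 1/2 + s`. On `|s| ≤ 1/2` the density is
symmetric about the MAP point, `g (1/2 + s) = g (1/2 - s)`, so `∫ (f - 1/2) g` only sees
`s > 1/2`, where the odd part of `s ↦ s g (1/2 + s)` equals `e^{-3/4} s (e^{1-2s} - 1) e^{-s²}`. -/

open MeasureTheory Real Set

theorem integral_eq_setIntegral_Ioi_add_comp_neg {E : Type*} [NormedAddCommGroup E]
    [NormedSpace ℝ E] {h : ℝ → E} (hh : Integrable h) :
    ∫ x, h x = ∫ x in Ioi 0, (h x + h (-x)) := by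
  rw [integral_add hh.integrableOn hh.comp_neg.integrableOn, integral_comp_neg_Ioi, neg_zero,
    add_comm, intervalIntegral.integral_Iic_add_Ioi hh.integrableOn hh.integrableOn]

noncomputable def posteriorDensity (f : ℝ) : ℝ := exp (-f ^ 2 - |1 - f|)

theorem continuous_posteriorDensity : Continuous posteriorDensity := by
  unfold posteriorDensity
  fun_prop

theorem posteriorDensity_pos (f : ℝ) : 0 < posteriorDensity f := exp_pos _

theorem posteriorDensity_le (f : ℝ) : posteriorDensity f ≤ exp (-f ^ 2) :=
  exp_le_exp.2 (by linarith [abs_nonneg (1 - f)])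

theorem integrable_posteriorDensity : Integrable posteriorDensity := by
  refine (integrable_exp_neg_mul_sq one_pos).mono' continuous_posteriorDensity.aestronglyMeasurable
    (ae_of_all _ fun f => ?_)
  rw [norm_of_nonneg (posteriorDensity_pos f).le, neg_mul, one_mul]
  exact posteriorDensity_le f

theorem integrable_mul_posteriorDensity : Integrable fun f => f * posteriorDensity f := by
  refine (integrable_mul_exp_neg_mul_sq one_pos).norm.mono'
    (continuous_id.mul continuous_posteriorDensity).aestronglyMeasurable (ae_of_all _ fun f => ?_)
  rw [norm_mul, norm_mul, norm_of_nonneg (posteriorDensity_pos f).le,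
    norm_of_nonneg (exp_pos _).le, neg_mul, one_mul]
  exact mul_le_mul_of_nonneg_left (posteriorDensity_le f) (norm_nonneg f)

theorem integrable_sub_mul_posteriorDensity (a : ℝ) :
    Integrable fun f => (f - a) * posteriorDensity f :=
  (integrable_mul_posteriorDensity.sub (integrable_posteriorDensity.const_mul a)).congr
    (ae_of_all _ fun f => by simp only [Pi.sub_apply]; ring)

theorem integral_posteriorDensity_pos : 0 < ∫ f, posteriorDensity f :=
  integral_exp_pos integrable_posteriorDensity

theorem posteriorDensity_of_le_one {f : ℝ} (hf : f ≤ 1) :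
    posteriorDensity f = exp (-f ^ 2 - (1 - f)) := by
  rw [posteriorDensity, abs_of_nonneg (sub_nonneg.2 hf)]

theorem posteriorDensity_of_one_le {f : ℝ} (hf : 1 ≤ f) :
    posteriorDensity f = exp (-f ^ 2 + (1 - f)) := by
  rw [posteriorDensity, abs_of_nonpos (sub_nonpos.2 hf), sub_neg_eq_add]

theorem posteriorDensity_one_sub {f : ℝ} (h₀ : 0 ≤ f) (h₁ : f ≤ 1) :
    posteriorDensity (1 - f) = posteriorDensity f := by
  rw [posteriorDensity_of_le_one h₁, posteriorDensity_of_le_one (by linarith)]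
  ring_nf

theorem mul_posteriorDensity_add_half_add_neg_of_half_le {s : ℝ} (hs : 1 / 2 ≤ s) :
    s * posteriorDensity (s + 1 / 2) + -s * posteriorDensity (-s + 1 / 2)
      = exp (-3 / 4) * (s * (exp (1 - 2 * s) - 1) * exp (-s ^ 2)) := by
  rw [posteriorDensity_of_one_le (by linarith), posteriorDensity_of_le_one (by linarith),
    show -(s + 1 / 2) ^ 2 + (1 - (s + 1 / 2)) = -3 / 4 + (1 - 2 * s + -s ^ 2) by ring,
    show -(-s + 1 / 2) ^ 2 - (1 - (-s + 1 / 2)) = -3 / 4 + -s ^ 2 by ring]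
  simp only [exp_add]
  ring

theorem integral_sub_half_mul_posteriorDensity :
    ∫ f, (f - 1 / 2) * posteriorDensity f
      = exp (-3 / 4) * ∫ s in Ioi (1 / 2 : ℝ), s * (exp (1 - 2 * s) - 1) * exp (-s ^ 2) := by
  have hshift : Integrable fun s : ℝ => s * posteriorDensity (s + 1 / 2) := by
    simpa only [add_sub_cancel_right] using
      (integrable_sub_mul_posteriorDensity (1 / 2)).comp_add_right (1 / 2)
  calc ∫ f, (f - 1 / 2) * posteriorDensity f
      = ∫ s, s * posteriorDensity (s + 1 / 2) := by
        rw [← integral_add_right_eq_self _ (1 / 2 : ℝ)]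
        simp only [add_sub_cancel_right]
    _ = ∫ s in Ioi 0, (s * posteriorDensity (s + 1 / 2) + -s * posteriorDensity (-s + 1 / 2)) :=
        integral_eq_setIntegral_Ioi_add_comp_neg hshift
    _ = ∫ s in Ioi (1 / 2), (s * posteriorDensity (s + 1 / 2)
          + -s * posteriorDensity (-s + 1 / 2)) := by
        refine setIntegral_eq_of_subset_of_forall_sdiff_eq_zero measurableSet_Ioi
          (Ioi_subset_Ioi (by norm_num)) fun s ⟨hs₀, hs₁⟩ => ?_
        simp only [mem_Ioi, not_lt] at hs₀ hs₁
        rw [show -s + 1 / 2 = 1 - (s + 1 / 2) by ring,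
          posteriorDensity_one_sub (by linarith) (by linarith)]
        ring
    _ = exp (-3 / 4) * ∫ s in Ioi (1 / 2 : ℝ), s * (exp (1 - 2 * s) - 1) * exp (-s ^ 2) := by
        rw [← integral_const_mul]
        exact setIntegral_congr_fun measurableSet_Ioi fun s hs =>
          mul_posteriorDensity_add_half_add_neg_of_half_le (le_of_lt hs)

/-- With `A = ∫ exp(-f² - |1-f|) df`, the difference between the posterior mean
`(1/A) ∫ f exp(-f² - |1-f|) df` and the MAP estimate `1/2` equals
`(e^{-3/4}/A) ∫_{1/2}^∞ s (e^{1-2s} - 1) e^{-s²} ds`. -/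
theorem minimum_variance_minus_map :
    (1 / (∫ f : ℝ, Real.exp (-f ^ 2 - |1 - f|))) *
        (∫ f : ℝ, f * Real.exp (-f ^ 2 - |1 - f|)) - 1 / 2
      = (Real.exp (-3 / 4) / (∫ f : ℝ, Real.exp (-f ^ 2 - |1 - f|))) *
          ∫ s in Set.Ioi (1 / 2 : ℝ), s * (Real.exp (1 - 2 * s) - 1) * Real.exp (-s ^ 2) := by
  change (1 / ∫ f, posteriorDensity f) * (∫ f, f * posteriorDensity f) - 1 / 2
    = (exp (-3 / 4) / ∫ f, posteriorDensity f) * _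
  have hA := integral_posteriorDensity_pos.ne'
  have hmean : ∫ f, f * posteriorDensity f
      = (∫ f, (f - 1 / 2) * posteriorDensity f) + ∫ f, 1 / 2 * posteriorDensity f := by
    rw [← integral_add (integrable_sub_mul_posteriorDensity _)
      (integrable_posteriorDensity.const_mul _)]
    simp only [← add_mul, sub_add_cancel]
  rw [hmean, integral_const_mul, integral_sub_half_mul_posteriorDensity]
  field_simp
  ring
end

section
/- Let A = ∫_{−∞}^{∞} exp(−f² − |1 − f|) df. Then (1/A) ∫_{−∞}^{∞} f · exp(−f² − |1 − f|) df < 1/2. -/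
open MeasureTheory Real

noncomputable def w (x : ℝ) : ℝ := Real.exp (-x ^ 2 - |1 - x|)

lemma w_pos (x : ℝ) : 0 < w x := Real.exp_pos _

lemma w_cont : Continuous w := by unfold w; fun_prop

lemma integrable_w : Integrable w := by
  refine (integrable_exp_neg_mul_sq one_pos).mono' w_cont.aestronglyMeasurable ?_
  filter_upwards with x
  rw [Real.norm_eq_abs, abs_of_pos (w_pos x), w, Real.exp_le_exp]
  have := abs_nonneg (1 - x)
  nlinarith

lemma integrable_xw : Integrable (fun x : ℝ => x * w x) := by
  refine ((integrable_exp_neg_mul_sq one_pos).const_mul (Real.exp 1)).mono'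
    (continuous_id.mul w_cont).aestronglyMeasurable ?_
  filter_upwards with x
  rw [Real.norm_eq_abs, abs_mul, abs_of_pos (w_pos x)]
  have h1 : |x| ≤ Real.exp |x| := le_trans (by linarith) (Real.add_one_le_exp |x|)
  have h2 : w x ≤ Real.exp (1 - |x| - x ^ 2) := by
    rw [w, Real.exp_le_exp]
    have h := abs_sub_abs_le_abs_sub x 1
    rw [abs_sub_comm] at h
    simp only [abs_one] at h
    linarith
  calc |x| * w x ≤ Real.exp |x| * Real.exp (1 - |x| - x ^ 2) :=
        mul_le_mul h1 h2 (le_of_lt (w_pos x)) (Real.exp_nonneg _)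
    _ = Real.exp 1 * Real.exp (-1 * x ^ 2) := by
        rw [← Real.exp_add, ← Real.exp_add]; ring_nf

lemma w_refl_le {x : ℝ} (hx : x ≤ 1/2) : w (1 - x) ≤ w x := by
  rw [w, w, Real.exp_le_exp]
  have h2 : |1 - (1 - x)| = |x| := by ring_nf
  rw [h2, abs_of_nonneg (by linarith : (0:ℝ) ≤ 1 - x)]
  have := le_abs_self x
  nlinarith

lemma w_le_refl {x : ℝ} (hx : 1/2 ≤ x) : w x ≤ w (1 - x) := by
  rw [w, w, Real.exp_le_exp]
  have h2 : |1 - (1 - x)| = |x| := by ring_nf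
  rw [h2, abs_of_nonneg (by linarith : (0:ℝ) ≤ x)]
  have := le_abs_self (1 - x)
  nlinarith

lemma w_refl_lt {x : ℝ} (hx : x < 0) : w (1 - x) < w x := by
  rw [w, w, Real.exp_lt_exp]
  have h2 : |1 - (1 - x)| = |x| := by ring_nf
  rw [h2, abs_of_nonneg (by linarith : (0:ℝ) ≤ 1 - x), abs_of_neg hx]
  nlinarith

/-- With `A = ∫ exp(-f² - |1-f|) df`, the posterior mean
`(1/A) ∫ f exp(-f² - |1-f|) df` is strictly smaller than the MAP estimate `1/2`. -/
theorem minimum_variance_lt_map :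
    (1 / (∫ f : ℝ, Real.exp (-f ^ 2 - |1 - f|))) *
        (∫ f : ℝ, f * Real.exp (-f ^ 2 - |1 - f|)) < 1 / 2 := by
  have hAeq : (∫ f : ℝ, Real.exp (-f ^ 2 - |1 - f|)) = ∫ f : ℝ, w f := rfl
  have hMeq : (∫ f : ℝ, f * Real.exp (-f ^ 2 - |1 - f|)) = ∫ f : ℝ, f * w f := rfl
  rw [hAeq, hMeq]
  set A := ∫ f : ℝ, w f with hA
  set M := ∫ f : ℝ, f * w f with hM
  -- A > 0
  have hApos : 0 < A := by
    rw [hA]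
    rw [integral_pos_iff_support_of_nonneg (fun x => (w_pos x).le) integrable_w]
    have : Function.support w = Set.univ :=
      Set.eq_univ_of_forall fun x => (w_pos x).ne'
    rw [this]
    simp
  -- integrability pieces
  have i1 : Integrable (fun x : ℝ => (1/2 - x) * w x) := by
    have : (fun x : ℝ => (1/2 - x) * w x)
        = fun x : ℝ => (1/2 : ℝ) * w x - x * w x := by
      funext x; ring
    rw [this]
    exact (integrable_w.const_mul _).sub integrable_xw
  have ih : Integrable (fun x : ℝ => (x - 1/2) * w x) := by
    have : (fun x : ℝ => (x - 1/2) * w x)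
        = fun x : ℝ => x * w x - (1/2 : ℝ) * w x := by
      funext x; ring
    rw [this]
    exact integrable_xw.sub (integrable_w.const_mul _)
  have i2 : Integrable (fun x : ℝ => (1/2 - x) * w (1 - x)) := by
    have := ih.comp_sub_left 1
    simpa using this.congr (by filter_upwards with x; ring_nf)
  -- the reflected integral
  have hrefl : (∫ x : ℝ, (1/2 - x) * w (1 - x)) = ∫ x : ℝ, (x - 1/2) * w x := by
    have h := integral_sub_left_eq_self (fun t : ℝ => (t - 1/2) * w t) (volume) 1
    calc (∫ x : ℝ, (1/2 - x) * w (1 - x))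
        = ∫ x : ℝ, ((1 - x) - 1/2) * w (1 - x) := by
          congr 1; funext x; ring_nf
      _ = ∫ x : ℝ, (x - 1/2) * w x := h
  -- positivity of the symmetrized integral
  set g : ℝ → ℝ := fun x => (1/2 - x) * (w x - w (1 - x)) with hg
  have hgnonneg : ∀ x, 0 ≤ g x := by
    intro x
    rcases le_total x (1/2) with h | h
    · exact mul_nonneg (by linarith) (by linarith [w_refl_le h])
    · show 0 ≤ (1/2 - x) * (w x - w (1 - x))
      nlinarith [w_le_refl h]
  have hgint : Integrable g := by
    have : g = fun x : ℝ => (1/2 - x) * w x - (1/2 - x) * w (1 - x) := by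
      funext x; rw [hg]; ring
    rw [this]
    exact i1.sub i2
  have hKpos : 0 < ∫ x : ℝ, g x := by
    rw [integral_pos_iff_support_of_nonneg hgnonneg hgint]
    have hsub : Set.Iio (0:ℝ) ⊆ Function.support g := by
      intro x hx
      simp only [Set.mem_Iio] at hx
      exact (mul_pos (by linarith) (by linarith [w_refl_lt hx])).ne'
    calc (0:ENNReal) < volume (Set.Iio (0:ℝ)) := by simp [Real.volume_Iio]
      _ ≤ volume (Function.support g) := measure_mono hsub
  -- compute ∫ g = A - 2M
  have hKeq : (∫ x : ℝ, g x) = A - 2 * M := by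
    have hsplit : (∫ x : ℝ, g x)
        = (∫ x : ℝ, (1/2 - x) * w x) - ∫ x : ℝ, (1/2 - x) * w (1 - x) := by
      rw [← integral_sub i1 i2]
      congr 1; funext x; rw [hg]; ring
    have e1 : (∫ x : ℝ, (1/2 - x) * w x) = (1/2) * A - M := by
      have : (fun x : ℝ => (1/2 - x) * w x)
          = fun x : ℝ => (1/2 : ℝ) * w x - x * w x := by funext x; ring
      rw [this, integral_sub (integrable_w.const_mul _) integrable_xw,
        integral_const_mul, hA, hM]
    have e2 : (∫ x : ℝ, (x - 1/2) * w x) = M - (1/2) * A := by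
      have : (fun x : ℝ => (x - 1/2) * w x)
          = fun x : ℝ => x * w x - (1/2 : ℝ) * w x := by funext x; ring
      rw [this, integral_sub integrable_xw (integrable_w.const_mul _),
        integral_const_mul, hA, hM]
    rw [hsplit, hrefl, e1, e2]; ring
  have hMlt : M < A / 2 := by
    rw [hKeq] at hKpos; linarith
  rw [one_div, inv_mul_eq_div, div_lt_iff₀ hApos]
  linarith
end

section
/- For every σ > 0 and every e ∈ ℝ, (1/(√2 σ)) · exp(−√2 |e| / σ) = ∫_{0}^{∞} (2πτ)^{−1/2} · exp(−e²/(2τ)) · σ^{−2} · exp(−τ/σ²) dτ. -/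
/-!
Substituting `τ = (σ x) ^ 2` turns the mixture integral into a multiple of
`∫₀^∞ exp (-x ^ 2 - c ^ 2 / x ^ 2) dx` with `c = e / (√2 σ)`, and this integral equals
`√π / 2 * exp (-2 |c|)` (Cauchy–Schlömilch): the substitution `x ↦ c / x` shows that `f` and
`(c / x ^ 2) f` have the same integral, and completing the square writes their sum as
`exp (-2 c) * ∫₀^∞ (1 + c / x ^ 2) exp (-(x - c / x) ^ 2) dx`, which the substitution
`y = x - c / x` turns into the Gaussian integral `√π`.
-/

open MeasureTheory Real Set

variable {E : Type*} [NormedAddCommGroup E] [NormedSpace ℝ E] {c : ℝ}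

theorem image_const_div_Ioi_zero (hc : 0 < c) : (c / ·) '' Ioi (0 : ℝ) = Ioi 0 := by
  refine Subset.antisymm (image_subset_iff.2 fun x hx ↦ div_pos hc hx) fun y hy ↦ ?_
  exact ⟨c / y, div_pos hc hy, div_div_cancel₀ hc.ne'⟩

theorem hasDerivAt_const_div {x : ℝ} (hx : x ≠ 0) : HasDerivAt (c / ·) (-(c / x ^ 2)) x := by
  simpa [div_eq_mul_inv] using (hasDerivAt_inv hx).const_mul c

theorem injOn_const_div_Ioi_zero (hc : 0 < c) : InjOn (c / ·) (Ioi (0 : ℝ)) :=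
  fun x _ y _ h ↦ by simpa [div_div_cancel₀ hc.ne'] using congrArg (c / ·) h

theorem integral_comp_const_div_Ioi (g : ℝ → E) (hc : 0 < c) :
    ∫ x in Ioi (0 : ℝ), (c / x ^ 2) • g (c / x) = ∫ y in Ioi 0, g y := by
  have := integral_image_eq_integral_abs_deriv_smul measurableSet_Ioi
    (fun x hx ↦ (hasDerivAt_const_div (mem_Ioi.1 hx).ne').hasDerivWithinAt)
    (injOn_const_div_Ioi_zero hc) g
  rw [image_const_div_Ioi_zero hc] at this
  rw [this]
  refine setIntegral_congr_fun measurableSet_Ioi fun x hx ↦ ?_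
  rw [abs_neg, abs_of_pos (by have := mem_Ioi.1 hx; positivity)]

theorem integrableOn_comp_const_div_Ioi (g : ℝ → E) (hc : 0 < c) :
    IntegrableOn (fun x ↦ (c / x ^ 2) • g (c / x)) (Ioi (0 : ℝ)) ↔
      IntegrableOn g (Ioi 0) := by
  have := integrableOn_image_iff_integrableOn_abs_deriv_smul measurableSet_Ioi
    (fun x hx ↦ (hasDerivAt_const_div (mem_Ioi.1 hx).ne').hasDerivWithinAt)
    (injOn_const_div_Ioi_zero hc) g
  rw [image_const_div_Ioi_zero hc] at this
  rw [this]
  refine integrableOn_congr_fun (fun x hx ↦ ?_) measurableSet_Ioi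
  rw [abs_neg, abs_of_pos (by have := mem_Ioi.1 hx; positivity)]

theorem image_sub_const_div_Ioi_zero (hc : 0 < c) :
    (fun x ↦ x - c / x) '' Ioi (0 : ℝ) = univ := by
  refine eq_univ_of_forall fun y ↦ ?_
  -- the positive root of `x ^ 2 - y x - c`
  set s := √(y ^ 2 + 4 * c)
  have hs : s ^ 2 = y ^ 2 + 4 * c := sq_sqrt (by positivity)
  have hys : |y| < s := by
    rw [← sqrt_sq_eq_abs]; exact sqrt_lt_sqrt (sq_nonneg y) (by linarith)
  have hx : 0 < (y + s) / 2 := by linarith [neg_abs_le y]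
  have hcx : c / ((y + s) / 2) = (s - y) / 2 := by
    rw [div_eq_iff hx.ne']
    linear_combination -hs / 4
  exact ⟨_, hx, by simp only [hcx]; ring⟩

theorem hasDerivAt_sub_const_div {x : ℝ} (hx : x ≠ 0) :
    HasDerivAt (fun x ↦ x - c / x) (1 + c / x ^ 2) x := by
  simpa using (hasDerivAt_id' x).fun_sub (hasDerivAt_const_div (c := c) hx)

theorem strictMonoOn_sub_const_div (hc : 0 < c) :
    StrictMonoOn (fun x ↦ x - c / x) (Ioi (0 : ℝ)) :=
  fun _ hx _ _ hxy ↦ sub_lt_sub hxy (div_lt_div_of_pos_left hc hx hxy)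

theorem integral_comp_sub_const_div_Ioi (g : ℝ → E) (hc : 0 < c) :
    ∫ x in Ioi (0 : ℝ), (1 + c / x ^ 2) • g (x - c / x) = ∫ y, g y := by
  have := integral_image_eq_integral_abs_deriv_smul measurableSet_Ioi
    (fun x hx ↦ (hasDerivAt_sub_const_div (mem_Ioi.1 hx).ne').hasDerivWithinAt)
    (strictMonoOn_sub_const_div hc).injOn g
  rw [image_sub_const_div_Ioi_zero hc, setIntegral_univ] at this
  rw [this]
  refine setIntegral_congr_fun measurableSet_Ioi fun x hx ↦ ?_
  rw [abs_of_pos (by have := mem_Ioi.1 hx; positivity)]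

theorem integral_comp_mul_sq_Ioi (g : ℝ → E) {a : ℝ} (ha : 0 < a) :
    ∫ x in Ioi (0 : ℝ), (2 * a ^ 2 * x) • g ((a * x) ^ 2) = ∫ y in Ioi 0, g y := by
  have hscale :=
    integral_comp_mul_left_Ioi' (fun x ↦ (2 * x ^ ((2 : ℝ) - 1)) • g (x ^ (2 : ℝ))) 0 ha
  rw [mul_zero] at hscale
  rw [← integral_comp_rpow_Ioi_of_pos (g := g) two_pos, ← hscale, ← integral_smul]
  refine setIntegral_congr_fun measurableSet_Ioi fun x _ ↦ ?_
  norm_num [rpow_two, smul_smul]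
  ring_nf

theorem integrableOn_exp_neg_sq_sub_div_sq (c : ℝ) :
    IntegrableOn (fun x ↦ exp (-x ^ 2 - c ^ 2 / x ^ 2)) (Ioi 0) := by
  refine ((integrable_exp_neg_mul_sq one_pos).integrableOn).mono' (by fun_prop) ?_
  refine Filter.Eventually.of_forall fun x ↦ ?_
  rw [norm_of_nonneg (exp_pos _).le, exp_le_exp]
  have : 0 ≤ c ^ 2 / x ^ 2 := by positivity
  linarith

theorem integral_exp_neg_sq_sub_div_sq_of_pos (hc : 0 < c) :
    ∫ x in Ioi 0, exp (-x ^ 2 - c ^ 2 / x ^ 2) = √π / 2 * exp (-(2 * c)) := by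
  set f : ℝ → ℝ := fun x ↦ exp (-x ^ 2 - c ^ 2 / x ^ 2)
  have hf_inv : ∀ x, f (c / x) = f x := by
    intro x
    rcases eq_or_ne x 0 with rfl | hx
    · simp [f]
    · simp only [f]; field_simp; ring_nf
  have hf_int : IntegrableOn f (Ioi 0) := integrableOn_exp_neg_sq_sub_div_sq c
  have hf'_int : IntegrableOn (fun x ↦ c / x ^ 2 * f x) (Ioi 0) := by
    simpa [hf_inv] using (integrableOn_comp_const_div_Ioi f hc).2 hf_int
  have hf' : ∫ x in Ioi 0, c / x ^ 2 * f x = ∫ x in Ioi 0, f x := by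
    simpa [hf_inv] using integral_comp_const_div_Ioi f hc
  -- completing the square: `x ^ 2 + c ^ 2 / x ^ 2 = (x - c / x) ^ 2 + 2 c`
  have hsq : EqOn (fun x ↦ (1 + c / x ^ 2) * exp (-(x - c / x) ^ 2))
      (fun x ↦ exp (2 * c) * (f x + c / x ^ 2 * f x)) (Ioi 0) := by
    intro x hx
    have hx : x ≠ 0 := (mem_Ioi.1 hx).ne'
    have : -(x - c / x) ^ 2 = 2 * c + (-x ^ 2 - c ^ 2 / x ^ 2) := by field_simp; ring
    simp only [f, this, exp_add]
    ring
  have hgauss : ∫ y, exp (-y ^ 2) = √π := by simpa using integral_gaussian 1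
  have hsubst := integral_comp_sub_const_div_Ioi (fun y ↦ exp (-y ^ 2)) hc
  simp only [smul_eq_mul] at hsubst
  rw [setIntegral_congr_fun measurableSet_Ioi hsq, integral_const_mul, integral_add hf_int hf'_int,
    hf', hgauss] at hsubst
  rw [exp_neg, ← hsubst]
  field_simp
  ring

theorem integral_exp_neg_sq_sub_div_sq (c : ℝ) :
    ∫ x in Ioi 0, exp (-x ^ 2 - c ^ 2 / x ^ 2) = √π / 2 * exp (-(2 * |c|)) := by
  rcases (abs_nonneg c).eq_or_lt with h | h
  · rw [abs_eq_zero.1 h.symm]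
    simpa using integral_gaussian_Ioi 1
  · rw [← sq_abs c]
    exact integral_exp_neg_sq_sub_div_sq_of_pos h

/-- Scale-mixture-of-normals representation of the Laplace density with variance `σ²`:
for every `σ > 0` and `e ∈ ℝ`,
`(1/(√2 σ)) exp(-√2 |e|/σ) = ∫_0^∞ (2πτ)^{-1/2} exp(-e²/(2τ)) σ⁻² exp(-τ/σ²) dτ`. -/
theorem laplace_scale_mixture (σ : ℝ) (hσ : 0 < σ) (e : ℝ) :
    1 / (Real.sqrt 2 * σ) * Real.exp (-(Real.sqrt 2 * |e|) / σ)
      = ∫ τ in Set.Ioi (0 : ℝ),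
          (Real.sqrt (2 * Real.pi * τ))⁻¹ * Real.exp (-e ^ 2 / (2 * τ)) *
            (σ ^ 2)⁻¹ * Real.exp (-τ / σ ^ 2) := by
  set c := e / (√2 * σ)
  have hs2 : √2 ^ 2 = 2 := sq_sqrt zero_le_two
  have hintegrand : EqOn (fun x ↦ (2 * σ ^ 2 * x) • ((√(2 * π * (σ * x) ^ 2))⁻¹ *
        exp (-e ^ 2 / (2 * (σ * x) ^ 2)) * (σ ^ 2)⁻¹ * exp (-(σ * x) ^ 2 / σ ^ 2)))
      (fun x ↦ 2 / (√2 * √π * σ) * exp (-x ^ 2 - c ^ 2 / x ^ 2)) (Ioi 0) := by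
    intro x hx
    have hx : 0 < x := hx
    have hexponent :
        -x ^ 2 - c ^ 2 / x ^ 2 = -e ^ 2 / (2 * (σ * x) ^ 2) + -(σ * x) ^ 2 / σ ^ 2 := by
      simp only [c]; field_simp; rw [hs2]; ring
    dsimp only
    rw [sqrt_mul' _ (by positivity), sqrt_sq (by positivity), sqrt_mul zero_le_two, hexponent,
      exp_add, smul_eq_mul]
    field_simp
  rw [← integral_comp_mul_sq_Ioi _ hσ, setIntegral_congr_fun measurableSet_Ioi hintegrand,
    integral_const_mul, integral_exp_neg_sq_sub_div_sq, abs_div,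
    abs_of_pos (by positivity : 0 < √2 * σ)]
  field_simp
  congr 1
  field_simp
  linear_combination -|e| * hs2
end
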